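/- Shamir secret sharing privacy: for a secret s in a field F of size q, any t−1 evaluation shares (f(x_1),…,f(x_{t−1})) at fixed distinct nonzero points, taken over a uniformly random polynomial f of degree < t with f(0) = s, are uniformly distributed on F^{t−1}; in particular their distribution is independent of s. -/

import Mathlib

/-!
Adjoin the secret's node `0` to the share nodes `x₁,…,x_{t−1}`: these `t` distinct points
determine a polynomial of degree `< t` uniquely and every choice of values at them is attained
(Lagrange interpolation). Fixing the value `s` at `0` therefore leaves the shares free and
determines `f` from them.
-/

open Polynomial Function

theorem Function.Injective.optionElim {α β : Type*} {a : β} {x : α → β} (hx : Injective x)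
    (ha : ∀ i, x i ≠ a) : Injective fun o : Option α => o.elim a x := by
  rintro (_ | i) (_ | j) h
  · rfl
  · exact absurd h.symm (ha j)
  · exact absurd h (ha i)
  · exact congrArg some (hx h)

namespace Lagrange

variable {F ι : Type*} [Field F] [Fintype ι] [DecidableEq ι]

theorem bijective_eval_of_degree_lt_card {v : ι → F} (hv : Injective v) :
    Bijective fun f : {f : F[X] // f.degree < Fintype.card ι} => fun i => f.1.eval (v i) := by
  have hvs : Set.InjOn v (Finset.univ : Finset ι) := hv.injOn
  refine ⟨fun f g hfg => Subtype.ext ?_, fun r => ?_⟩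
  · exact eq_of_degrees_lt_of_eval_index_eq Finset.univ hvs f.2 g.2
      fun i _ => congrFun hfg i
  · exact ⟨⟨interpolate Finset.univ v r, degree_interpolate_lt r hvs⟩,
      funext fun i => eval_interpolate_at_node r hvs (Finset.mem_univ i)⟩

theorem bijective_eval_of_eval_eq {x : ι → F} (hx : Injective x) {a : F} (ha : ∀ i, x i ≠ a)
    (s : F) :
    Bijective fun f : {f : F[X] // f.degree < ↑(Fintype.card ι + 1) ∧ f.eval a = s} =>
      fun i => f.1.eval (x i) := by
  have hcard : Fintype.card (Option ι) = Fintype.card ι + 1 := Fintype.card_option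
  obtain ⟨hinj, hsurj⟩ := hcard ▸ bijective_eval_of_degree_lt_card (hx.optionElim ha)
  refine ⟨fun f g hfg => Subtype.ext ?_, fun y => ?_⟩
  · have hfg' :
        (fun o : Option ι => f.1.eval (o.elim a x)) = fun o => g.1.eval (o.elim a x) := by
      funext o
      cases o with
      | none => exact f.2.2.trans g.2.2.symm
      | some i => exact congrFun hfg i
    exact Subtype.mk.inj (@hinj ⟨f.1, f.2.1⟩ ⟨g.1, g.2.1⟩ hfg')
  · obtain ⟨⟨f, hf⟩, hfy⟩ := hsurj fun o => o.elim s y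
    exact ⟨⟨f, hf, congrFun hfy none⟩, funext fun i => congrFun hfy (some i)⟩

end Lagrange

theorem shamir_privacy_general {F : Type*} [Field F] (t : ℕ) (ht : 1 ≤ t)
    (x : Fin (t - 1) → F) (hinj : Function.Injective x) (hx0 : ∀ i, x i ≠ 0)
    (s : F) :
    Function.Bijective
      (fun f : {f : Polynomial F // f.degree < t ∧ f.eval 0 = s} =>
        fun i : Fin (t - 1) => (f : Polynomial F).eval (x i)) := by
  have ht' : Fintype.card (Fin (t - 1)) + 1 = t := by
    rw [Fintype.card_fin]
    omega
  have h := Lagrange.bijective_eval_of_eval_eq hinj hx0 s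
  rwa [ht'] at h

/-- Shamir secret sharing privacy: for fixed distinct nonzero points `x₁,…,x_{t−1}`, the
share map `f ↦ (f(x₁),…,f(x_{t−1}))` is a bijection from the set of degree `< t`
polynomials with `f(0) = s` to `F^{t−1}`, for every secret `s`. -/
theorem shamir_privacy {F : Type*} [Field F] [Fintype F] (t : ℕ) (ht : 1 ≤ t)
    (x : Fin (t - 1) → F) (hinj : Function.Injective x) (hx0 : ∀ i, x i ≠ 0)
    (s : F) :
    Function.Bijective
      (fun f : {f : Polynomial F // f.degree < t ∧ f.eval 0 = s} =>
        fun i : Fin (t - 1) => (f : Polynomial F).eval (x i)) :=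
  shamir_privacy_general t ht x hinj hx0 s
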